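/- arXiv:2206.06826 — 6 statements merged into one kernel-verified Lean document; each statement's English description precedes it below -/
import Mathlib

section
/- There exists a continuous convex piecewise quadratic function φ on an interval, with quadratic segments φ_1,...,φ_s, such that φ(x) ≠ max_{1<=i<=s} φ_i(x) for some x in the domain. Concretely, for φ defined on [-5/3, 5/3] by φ(x) = 11x^2 + 12x + 6 on [-5/3,-1], φ(x) = 5x^2 on [-1,1], φ(x) = 11x^2 - 12x + 6 on [1, 5/3], one has φ(0) = 0 < max{φ_1(0), φ_2(0), φ_3(0)} = 6. -/
/-!
φ(x) = 5x² + 6·dist(x, [-1, 1])², a sum of convex continuous functions, so φ is convex and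
continuous. The outer segments exceed φ on [-1, 1]: at 0 they equal 6 while φ(0) = 0.
-/

open Set

noncomputable def phiEx (x : ℝ) : ℝ :=
  if x ≤ -1 then 11 * x ^ 2 + 12 * x + 6
  else if x ≤ 1 then 5 * x ^ 2
  else 11 * x ^ 2 - 12 * x + 6

lemma convexOn_max_abs_sub_zero_sq (r : ℝ) :
    ConvexOn ℝ univ fun x : ℝ => max (|x| - r) 0 ^ 2 := by
  have h : ConvexOn ℝ univ fun x : ℝ => max (|x| - r) 0 :=
    (convexOn_univ_norm.add_const (-r)).sup (convexOn_const 0 convex_univ) |>.congr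
      (fun x _ => by simp [sub_eq_add_neg])
  exact h.pow (fun _ _ => le_max_right _ _) 2

lemma phiEx_eq (x : ℝ) : phiEx x = 5 * x ^ 2 + 6 * max (|x| - 1) 0 ^ 2 := by
  unfold phiEx
  split_ifs with h₁ h₂
  · rw [abs_of_nonpos (by linarith), max_eq_left (by linarith)]; ring
  · rw [max_eq_right (by rw [sub_nonpos, abs_le]; constructor <;> linarith)]; ring
  · rw [abs_of_pos (by linarith), max_eq_left (by linarith)]; ring

lemma phiEx_of_le_neg_one {x : ℝ} (hx : x ≤ -1) : phiEx x = 11 * x ^ 2 + 12 * x + 6 := if_pos hx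

lemma phiEx_of_abs_le_one {x : ℝ} (hx : |x| ≤ 1) : phiEx x = 5 * x ^ 2 := by
  rw [phiEx_eq, max_eq_right (by linarith)]; ring

lemma phiEx_of_one_le {x : ℝ} (hx : 1 ≤ x) : phiEx x = 11 * x ^ 2 - 12 * x + 6 := by
  rw [phiEx_eq, abs_of_nonneg (by linarith), max_eq_left (by linarith)]; ring

lemma continuous_phiEx : Continuous phiEx := by
  simp_rw [funext phiEx_eq]; fun_prop

lemma convexOn_phiEx : ConvexOn ℝ univ phiEx := by
  have h5 : ConvexOn ℝ univ fun x : ℝ => 5 * x ^ 2 :=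
    (even_two.convexOn_pow).smul (by norm_num : (0 : ℝ) ≤ 5)
  have h6 := (convexOn_max_abs_sub_zero_sq 1).smul (by norm_num : (0 : ℝ) ≤ 6)
  exact (h5.add h6).congr fun x _ => (phiEx_eq x).symm

/-- There is a continuous convex piecewise quadratic function `φ` whose
pointwise max of segments does not reproduce it: for the concrete `φ` on `[-5/3, 5/3]`
with segments `11x²+12x+6`, `5x²`, `11x²-12x+6`, one has
`φ(0) = 0 < 6 = max{φ₁(0), φ₂(0), φ₃(0)}`. -/
theorem pwq_max_representation_fails :
    -- φ agrees with the three quadratic segments on their intervals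
    (∀ x ∈ Icc (-(5:ℝ)/3) (-1), phiEx x = 11 * x ^ 2 + 12 * x + 6) ∧
    (∀ x ∈ Icc (-(1:ℝ)) 1, phiEx x = 5 * x ^ 2) ∧
    (∀ x ∈ Icc (1:ℝ) (5/3), phiEx x = 11 * x ^ 2 - 12 * x + 6) ∧
    -- φ is continuous and convex on the domain
    ContinuousOn phiEx (Icc (-(5:ℝ)/3) (5/3)) ∧
    ConvexOn ℝ (Icc (-(5:ℝ)/3) (5/3)) phiEx ∧
    -- the max representation fails at x = 0
    phiEx 0 = 0 ∧
    max (max (11 * (0:ℝ) ^ 2 + 12 * 0 + 6) (5 * (0:ℝ) ^ 2))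
        (11 * (0:ℝ) ^ 2 - 12 * 0 + 6) = 6 ∧
    phiEx 0 <
      max (max (11 * (0:ℝ) ^ 2 + 12 * 0 + 6) (5 * (0:ℝ) ^ 2))
        (11 * (0:ℝ) ^ 2 - 12 * 0 + 6) := by
  have phiEx_zero : phiEx 0 = 0 := by simpa using phiEx_of_abs_le_one (x := 0) (by simp)
  refine ⟨fun x hx => phiEx_of_le_neg_one hx.2, fun x hx => phiEx_of_abs_le_one (abs_le.2 hx),
    fun x hx => phiEx_of_one_le hx.1, continuous_phiEx.continuousOn,
    convexOn_phiEx.subset (subset_univ _) (convex_Icc _ _), phiEx_zero, by norm_num, ?_⟩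
  rw [phiEx_zero]; norm_num
end

section
/- Let φ be a continuous convex piecewise quadratic function on [x_1lo, x_shi] with segments φ_i(x) = q_i x^2 + l_i x + c_i (q_i >= 0) on intervals [x_ilo, x_ihi], and let h be a continuous convex piecewise affine function on the same partition with segments h_i(x) = α_i x + β_i. Suppose for every i in {2,...,s} and j < i: φ_j(x_ilo) + h_j(x_ilo) <= φ_i(x_ilo) + h_i(x_ilo) and φ_j(x_ihi) + h_j(x_ihi) <= φ_i(x_ilo) + h_i(x_ilo) + (x_ihi - x_ilo)(2 q_i x_ilo + l_i + α_i); and for every i in {1,...,s-1} and j > i: φ_j(x_ihi) + h_j(x_ihi) <= φ_i(x_ihi) + h_i(x_ihi) and φ_j(x_ilo) + h_j(x_ilo) <= φ_i(x_ihi) + h_i(x_ihi) - (x_ihi - x_ilo)(2 q_i x_ihi + l_i + α_i). Then φ(x) + h(x) = max_{1<=i<=s} (φ_i(x) + α_i x + β_i) for all x in [x_1lo, x_shi]. -/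
open Set

/-!
On its own piece `[a, b]` the segment `fᵢ = φᵢ + hᵢ` dominates every other segment `fⱼ`. With
`d = b - a`, condition (6b) reads `fⱼ(b) ≤ fᵢ(b) - qᵢ d²`, and interpolating the quadratic
`fᵢ - fⱼ` between `a` and `b` gives
`d (fᵢ - fⱼ)(t) = (b - t)(fᵢ - fⱼ)(a) + (t - a)(fᵢ(b) - qᵢ d² - fⱼ(b)) + d (t - a)(qⱼ (b - t) + qᵢ (t - a))`,
a sum of nonnegative terms. Conditions (7) are the mirror image under `t ↦ -t`. Since `φ + h = fᵢ`
on the `i`-th piece, it equals the maximum of all segments there.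
-/

theorem Fin.exists_castSucc_le_and_le_succ {α : Type*} [LinearOrder α] {n : ℕ}
    (x : Fin (n + 2) → α) {t : α}
    (h0 : x 0 ≤ t) (hlast : t ≤ x (Fin.last (n + 1))) :
    ∃ i : Fin (n + 1), x i.castSucc ≤ t ∧ t ≤ x i.succ := by
  induction n with
  | zero => exact ⟨0, h0, hlast⟩
  | succ n ih =>
    by_cases h1 : t ≤ x 1
    · exact ⟨0, h0, h1⟩
    · obtain ⟨i, hi⟩ := ih (fun k => x k.succ) (le_of_not_ge h1) hlast
      exact ⟨i.succ, by simpa only [Fin.succ_castSucc] using hi⟩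

section QuadraticDominance

variable {Q L C Q' L' C' a b t : ℝ}

theorem quadratic_le_of_le_tangent_left (hQ : 0 ≤ Q) (hQ' : 0 ≤ Q')
    (ha : Q' * a ^ 2 + L' * a + C' ≤ Q * a ^ 2 + L * a + C)
    (hb : Q' * b ^ 2 + L' * b + C' ≤ Q * a ^ 2 + L * a + C + (b - a) * (2 * Q * a + L))
    (hat : a ≤ t) (htb : t ≤ b) :
    Q' * t ^ 2 + L' * t + C' ≤ Q * t ^ 2 + L * t + C := by
  rcases (hat.trans htb).eq_or_lt with rfl | hab
  · rwa [le_antisymm htb hat]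
  have key : (b - a) * (Q * t ^ 2 + L * t + C - (Q' * t ^ 2 + L' * t + C')) =
      (b - t) * (Q * a ^ 2 + L * a + C - (Q' * a ^ 2 + L' * a + C')) +
      (t - a) * (Q * a ^ 2 + L * a + C + (b - a) * (2 * Q * a + L) - (Q' * b ^ 2 + L' * b + C')) +
      (b - a) * (t - a) * (Q' * (b - t) + Q * (t - a)) := by ring
  have hbt : 0 ≤ b - t := sub_nonneg.2 htb
  have hta : 0 ≤ t - a := sub_nonneg.2 hat
  have hnonneg : 0 ≤ (b - a) * (Q * t ^ 2 + L * t + C - (Q' * t ^ 2 + L' * t + C')) := by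
    rw [key]
    refine add_nonneg (add_nonneg ?_ ?_) ?_
    · exact mul_nonneg hbt (sub_nonneg.2 ha)
    · exact mul_nonneg hta (sub_nonneg.2 hb)
    · exact mul_nonneg (mul_nonneg (sub_pos.2 hab).le hta)
        (add_nonneg (mul_nonneg hQ' hbt) (mul_nonneg hQ hta))
  exact sub_nonneg.1 (nonneg_of_mul_nonneg_right hnonneg (sub_pos.2 hab))

theorem quadratic_le_of_le_tangent_right (hQ : 0 ≤ Q) (hQ' : 0 ≤ Q')
    (hb : Q' * b ^ 2 + L' * b + C' ≤ Q * b ^ 2 + L * b + C)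
    (ha : Q' * a ^ 2 + L' * a + C' ≤ Q * b ^ 2 + L * b + C - (b - a) * (2 * Q * b + L))
    (hat : a ≤ t) (htb : t ≤ b) :
    Q' * t ^ 2 + L' * t + C' ≤ Q * t ^ 2 + L * t + C := by
  have := quadratic_le_of_le_tangent_left (L := -L) (C := C) (L' := -L') (C' := C') (a := -b) (b := -a) (t := -t) hQ hQ'
    (by linarith) (by linarith) (neg_le_neg htb) (neg_le_neg hat)
  linarith

end QuadraticDominance

theorem pwq_plus_pwa_eq_maxout_general
    (s : ℕ)
    (x : Fin (s + 2) → ℝ)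
    (q l c α β : Fin (s + 1) → ℝ)
    (φ h : ℝ → ℝ)
    -- φ equals the quadratic segments on the pieces
    (hφ : ∀ i : Fin (s + 1), ∀ t ∈ Icc (x i.castSucc) (x i.succ),
      φ t = q i * t ^ 2 + l i * t + c i)
    -- h equals the affine segments on the pieces
    (hh : ∀ i : Fin (s + 1), ∀ t ∈ Icc (x i.castSucc) (x i.succ),
      h t = α i * t + β i)
    -- convexity of φ: nonnegative curvature and nondecreasing one-sided slopes
    (hq : ∀ i, 0 ≤ q i)
    -- conditions (6): for j < i
    (hcond6a : ∀ i j : Fin (s + 1), j < i →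
      q j * (x i.castSucc) ^ 2 + l j * x i.castSucc + c j + α j * x i.castSucc + β j ≤
        q i * (x i.castSucc) ^ 2 + l i * x i.castSucc + c i + α i * x i.castSucc + β i)
    (hcond6b : ∀ i j : Fin (s + 1), j < i →
      q j * (x i.succ) ^ 2 + l j * x i.succ + c j + α j * x i.succ + β j ≤
        q i * (x i.castSucc) ^ 2 + l i * x i.castSucc + c i + α i * x i.castSucc + β i +
          (x i.succ - x i.castSucc) * (2 * q i * x i.castSucc + l i + α i))
    -- conditions (7): for j > i
    (hcond7a : ∀ i j : Fin (s + 1), i < j →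
      q j * (x i.succ) ^ 2 + l j * x i.succ + c j + α j * x i.succ + β j ≤
        q i * (x i.succ) ^ 2 + l i * x i.succ + c i + α i * x i.succ + β i)
    (hcond7b : ∀ i j : Fin (s + 1), i < j →
      q j * (x i.castSucc) ^ 2 + l j * x i.castSucc + c j + α j * x i.castSucc + β j ≤
        q i * (x i.succ) ^ 2 + l i * x i.succ + c i + α i * x i.succ + β i -
          (x i.succ - x i.castSucc) * (2 * q i * x i.succ + l i + α i)) :
    ∀ t ∈ Icc (x 0) (x (Fin.last (s + 1))),
      φ t + h t = Finset.univ.sup' Finset.univ_nonempty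
        (fun i : Fin (s + 1) => q i * t ^ 2 + l i * t + c i + α i * t + β i) := by
  intro t ht
  obtain ⟨i, hit⟩ := Fin.exists_castSucc_le_and_le_succ x ht.1 ht.2
  have hval : φ t + h t = q i * t ^ 2 + l i * t + c i + α i * t + β i := by
    rw [hφ i t hit, hh i t hit]; ring
  rw [hval]
  refine le_antisymm (Finset.le_sup' (fun j => q j * t ^ 2 + l j * t + c j + α j * t + β j)
    (Finset.mem_univ i)) (Finset.sup'_le _ _ fun j _ => ?_)
  rcases lt_trichotomy j i with hji | rfl | hij
  · have := quadratic_le_of_le_tangent_left (L := l i + α i) (C := c i + β i) (L' := l j + α j)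
      (C' := c j + β j) (hq i) (hq j) (by linarith [hcond6a i j hji])
      (by linarith [hcond6b i j hji]) hit.1 hit.2
    linarith
  · exact le_rfl
  · have := quadratic_le_of_le_tangent_right (L := l i + α i) (C := c i + β i) (L' := l j + α j)
      (C' := c j + β j) (hq i) (hq j) (by linarith [hcond7a i j hij])
      (by linarith [hcond7b i j hij]) hit.1 hit.2
    linarith

/-- Theorem 1 of the paper: Let `φ` be a continuous convex piecewise
quadratic function with segments `φᵢ(x) = qᵢx² + lᵢx + cᵢ` (with `qᵢ ≥ 0`) on a 1D
partition, and `h` a continuous convex piecewise affine function `hᵢ(x) = αᵢx + βᵢ`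
on the same partition. If the dominance conditions (6)-(7) hold, then
`φ(x) + h(x) = max_{1 ≤ i ≤ s} (φᵢ(x) + αᵢx + βᵢ)` on the whole domain. -/
theorem pwq_plus_pwa_eq_maxout
    (s : ℕ)
    (x : Fin (s + 2) → ℝ) (hx : StrictMono x)
    (q l c α β : Fin (s + 1) → ℝ)
    (φ h : ℝ → ℝ)
    -- φ equals the quadratic segments on the pieces
    (hφ : ∀ i : Fin (s + 1), ∀ t ∈ Icc (x i.castSucc) (x i.succ),
      φ t = q i * t ^ 2 + l i * t + c i)
    -- h equals the affine segments on the pieces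
    (hh : ∀ i : Fin (s + 1), ∀ t ∈ Icc (x i.castSucc) (x i.succ),
      h t = α i * t + β i)
    -- convexity of φ: nonnegative curvature and nondecreasing one-sided slopes
    (hq : ∀ i, 0 ≤ q i)
    (hkink : ∀ i : Fin s,
      2 * q i.castSucc * x i.castSucc.succ + l i.castSucc ≤
        2 * q i.succ * x i.castSucc.succ + l i.succ)
    -- convexity of h: nondecreasing slopes
    (hα : ∀ i : Fin s, α i.castSucc ≤ α i.succ)
    -- conditions (6): for j < i
    (hcond6a : ∀ i j : Fin (s + 1), j < i →
      q j * (x i.castSucc) ^ 2 + l j * x i.castSucc + c j + α j * x i.castSucc + β j ≤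
        q i * (x i.castSucc) ^ 2 + l i * x i.castSucc + c i + α i * x i.castSucc + β i)
    (hcond6b : ∀ i j : Fin (s + 1), j < i →
      q j * (x i.succ) ^ 2 + l j * x i.succ + c j + α j * x i.succ + β j ≤
        q i * (x i.castSucc) ^ 2 + l i * x i.castSucc + c i + α i * x i.castSucc + β i +
          (x i.succ - x i.castSucc) * (2 * q i * x i.castSucc + l i + α i))
    -- conditions (7): for j > i
    (hcond7a : ∀ i j : Fin (s + 1), i < j →
      q j * (x i.succ) ^ 2 + l j * x i.succ + c j + α j * x i.succ + β j ≤
        q i * (x i.succ) ^ 2 + l i * x i.succ + c i + α i * x i.succ + β i)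
    (hcond7b : ∀ i j : Fin (s + 1), i < j →
      q j * (x i.castSucc) ^ 2 + l j * x i.castSucc + c j + α j * x i.castSucc + β j ≤
        q i * (x i.succ) ^ 2 + l i * x i.succ + c i + α i * x i.succ + β i -
          (x i.succ - x i.castSucc) * (2 * q i * x i.succ + l i + α i)) :
    ∀ t ∈ Icc (x 0) (x (Fin.last (s + 1))),
      φ t + h t = Finset.univ.sup' Finset.univ_nonempty
        (fun i : Fin (s + 1) => q i * t ^ 2 + l i * t + c i + α i * t + β i) :=
  pwq_plus_pwa_eq_maxout_general s x q l c α β φ h hφ hh hq hcond6a hcond6b hcond7a hcond7b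
end

section
/- Under the hypotheses of the max-representation theorem (convex continuous PWQ φ, convex continuous PWA h on the same 1D partition satisfying conditions (5)-(7) of the paper), for any x in [x_ilo, x_ihi] and any j < i, the chord bound and tangent bound combine to give φ_j(x) + α_j x + β_j <= φ_i(x) + α_i x + β_i. -/
open Set

/-- In the setting of the max-representation theorem, for `x` in the
segment `[x_ilo, x_ihi]` and a segment index `j < i`, the chord bound on the convex
function `φⱼ + hⱼ` and the tangent bound on `φᵢ + hᵢ` combine to give
`φⱼ(x) + αⱼx + βⱼ ≤ φᵢ(x) + αᵢx + βᵢ`. -/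
theorem segment_dominance_on_interval
    (qi li ci αi βi qj lj cj αj βj lo hi : ℝ)
    (hqi : 0 ≤ qi) (hqj : 0 ≤ qj) (hlohi : lo < hi)
    -- condition (6a): domination at the lower interval bound
    (h6a : qj * lo ^ 2 + lj * lo + cj + αj * lo + βj ≤
      qi * lo ^ 2 + li * lo + ci + αi * lo + βi)
    -- condition (6b): domination below the tangent at the upper interval bound
    (h6b : qj * hi ^ 2 + lj * hi + cj + αj * hi + βj ≤
      qi * lo ^ 2 + li * lo + ci + αi * lo + βi +
        (hi - lo) * (2 * qi * lo + li + αi)) :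
    ∀ t ∈ Icc lo hi,
      qj * t ^ 2 + lj * t + cj + αj * t + βj ≤
        qi * t ^ 2 + li * t + ci + αi * t + βi := by
  intro t ht
  obtain ⟨h1, h2⟩ := ht
  nlinarith [mul_nonneg (mul_nonneg hqj (sub_nonneg.2 h2)) (sub_nonneg.2 h1),
    mul_nonneg hqi (sq_nonneg (t - lo)),
    mul_le_mul_of_nonneg_left h6a (sub_nonneg.2 h2),
    mul_le_mul_of_nonneg_left h6b (sub_nonneg.2 h1),
    mul_nonneg (mul_nonneg hqi (sub_nonneg.2 h2)) (sub_nonneg.2 h1)]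
end

section
/- Every continuous convex piecewise quadratic function φ on a bounded interval with s quadratic segments can be written as the difference of two pointwise maxima: φ(x) = max_{1<=i<=s}(q_i x^2 + (l_i + α_i) x + (c_i + β_i)) - max_{1<=i<=s}(α_i x + β_i) for suitable real coefficients α_i, β_i; equivalently, φ is exactly represented by a max-out neural network with one hidden layer of two max-out neurons (each taking the max of s affine functions of the augmented input (x, x^2)). -/
open Set

/-!
Add to `φ` the continuous convex piecewise linear function `ψ` whose slope jumps by a constant
`M` at every breakpoint, and call `gᵢ = φᵢ + ψᵢ` the resulting pieces. At a breakpoint `w` two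
consecutive pieces of `φ` agree, so their difference factors as `(t - w) * r(t)` with
`r(t) = Δq (t - w) + (jump of φ' at w)`; adding `ψ` adds `M` to `r`. Convexity makes the jump of
`φ'` nonnegative and, as all `qᵢ ≥ 0`, taking `M = (∑ qᵢ) * (length of the interval)` makes
`r ≥ 0` on the whole interval. So both the `gᵢ` and the `ψᵢ` cross in order: on the `i`-th
segment the `i`-th piece is the largest, and `max g - max ψ = gᵢ - ψᵢ = φᵢ = φ`.
-/

theorem Fin.apply_le_apply_of_unimodal {α : Type*} [Preorder α] {n : ℕ} {a : Fin (n + 1) → α}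
    {i : Fin (n + 1)} (hup : ∀ k : Fin n, k.succ ≤ i → a k.castSucc ≤ a k.succ)
    (hdown : ∀ k : Fin n, i ≤ k.castSucc → a k.succ ≤ a k.castSucc) (j : Fin (n + 1)) :
    a j ≤ a i := by
  rcases le_total j i with hji | hij
  · induction j using Fin.reverseInduction with
    | last => rw [le_antisymm hji (Fin.le_last i)]
    | cast k ih =>
      rcases hji.eq_or_lt with rfl | hlt
      · exact le_rfl
      · rw [Fin.castSucc_lt_iff_succ_le] at hlt
        exact (hup k hlt).trans (ih hlt)
  · induction j using Fin.induction with
    | zero => rw [le_antisymm hij (Fin.zero_le i)]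
    | succ k ih =>
      rcases hij.eq_or_lt with rfl | hlt
      · exact le_rfl
      · rw [← Fin.le_castSucc_iff] at hlt
        exact (hdown k hlt).trans (ih hlt)

theorem Fin.exists_mem_Icc_castSucc_succ {α : Type*} [LinearOrder α] {n : ℕ}
    {x : Fin (n + 2) → α} (hx : Monotone x) {t : α} (ht : t ∈ Icc (x 0) (x (Fin.last (n + 1)))) :
    ∃ i : Fin (n + 1), t ∈ Icc (x i.castSucc) (x i.succ) := by
  induction n with
  | zero => exact ⟨0, ht⟩
  | succ n ih =>
    by_cases h : t ≤ x (Fin.last (n + 1)).castSucc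
    · obtain ⟨i, hi⟩ := ih (hx.comp Fin.strictMono_castSucc.monotone) ⟨ht.1, h⟩
      exact ⟨i.castSucc, by rw [Fin.succ_castSucc]; exact hi⟩
    · exact ⟨Fin.last (n + 1), (not_le.1 h).le, by simpa using ht.2⟩

/-- `hf` says that consecutive pieces cross at the breakpoint between them, the later one
overtaking the earlier one. -/
theorem Fin.sup'_univ_eq_of_crossings {n : ℕ} {x : Fin (n + 2) → ℝ} (hx : Monotone x) {t : ℝ}
    {f : Fin (n + 1) → ℝ}
    (hf : ∀ k : Fin n, ∃ r, 0 ≤ r ∧ f k.succ - f k.castSucc = (t - x k.castSucc.succ) * r)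
    {i : Fin (n + 1)} (hi : t ∈ Icc (x i.castSucc) (x i.succ)) :
    Finset.univ.sup' Finset.univ_nonempty f = f i := by
  refine le_antisymm (Finset.sup'_le _ _ fun j _ => ?_) (Finset.le_sup' f (Finset.mem_univ i))
  refine Fin.apply_le_apply_of_unimodal (fun k hk => ?_) (fun k hk => ?_) j
  all_goals obtain ⟨r, hr, hfk⟩ := hf k
  · have : x k.castSucc.succ ≤ t := by
      rw [Fin.succ_castSucc]
      exact (hx (Fin.castSucc_le_castSucc_iff.2 hk)).trans hi.1
    nlinarith
  · have : t ≤ x k.castSucc.succ := hi.2.trans (hx (Fin.succ_le_succ_iff.2 hk))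
    nlinarith

theorem Fin.partialSum_affine_succ_sub {n : ℕ} (M : ℝ) (w : Fin n → ℝ) (k : Fin n) (t : ℝ) :
    (partialSum (fun _ => M) k.succ * t + partialSum (fun j => -(M * w j)) k.succ) -
      (partialSum (fun _ => M) k.castSucc * t + partialSum (fun j => -(M * w j)) k.castSucc) =
      (t - w k) * M := by
  simp only [Fin.partialSum_succ]
  ring

theorem quadratic_sub_eq_mul_of_eq {a b c a' b' c' w : ℝ}
    (h : a * w ^ 2 + b * w + c = a' * w ^ 2 + b' * w + c') (t : ℝ) :
    (a' * t ^ 2 + b' * t + c') - (a * t ^ 2 + b * t + c) =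
      (t - w) * ((a' - a) * (t - w) + ((2 * a' * w + b') - (2 * a * w + b))) := by
  linear_combination -h

theorem neg_mul_le_sub_mul {a a' Q u D : ℝ} (ha : 0 ≤ a) (ha' : 0 ≤ a') (haQ : a ≤ Q)
    (ha'Q : a' ≤ Q) (hu : |u| ≤ D) : -(Q * D) ≤ (a' - a) * u := by
  obtain ⟨hu₁, hu₂⟩ := abs_le.1 hu
  rcases le_total 0 u with h | h <;> nlinarith

/-- Corollary 1 / Conjecture 1 for n = 1: Every continuous convex
piecewise quadratic function `φ` with `s` segments on a bounded interval can be
written as a difference of two pointwise maxima,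
`φ(x) = max_i (qᵢx² + (lᵢ+αᵢ)x + (cᵢ+βᵢ)) - max_i (αᵢx + βᵢ)`,
i.e. it is exactly represented by a max-out network with one hidden layer of two
neurons acting on the augmented input `(x, x²)`. -/
theorem pwq_maxout_representation
    (s : ℕ)
    (x : Fin (s + 2) → ℝ) (hx : StrictMono x)
    (q l c : Fin (s + 1) → ℝ)
    (φ : ℝ → ℝ)
    (hφ : ∀ i : Fin (s + 1), ∀ t ∈ Icc (x i.castSucc) (x i.succ),
      φ t = q i * t ^ 2 + l i * t + c i)
    (hq : ∀ i, 0 ≤ q i)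
    (hkink : ∀ i : Fin s,
      2 * q i.castSucc * x i.castSucc.succ + l i.castSucc ≤
        2 * q i.succ * x i.castSucc.succ + l i.succ) :
    ∃ α β : Fin (s + 1) → ℝ,
      ∀ t ∈ Icc (x 0) (x (Fin.last (s + 1))),
        φ t =
          Finset.univ.sup' Finset.univ_nonempty
            (fun i : Fin (s + 1) => q i * t ^ 2 + (l i + α i) * t + (c i + β i)) -
          Finset.univ.sup' Finset.univ_nonempty
            (fun i : Fin (s + 1) => α i * t + β i) := by
  have hmono := hx.monotone
  have hcont : ∀ k : Fin s,
      q k.castSucc * x k.castSucc.succ ^ 2 + l k.castSucc * x k.castSucc.succ + c k.castSucc =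
        q k.succ * x k.castSucc.succ ^ 2 + l k.succ * x k.castSucc.succ + c k.succ := fun k => by
    rw [← hφ k.castSucc _ ⟨hmono (Fin.castSucc_le_succ _), le_rfl⟩, ← hφ k.succ]
    rw [Fin.succ_castSucc]
    exact ⟨le_rfl, hmono (Fin.castSucc_le_succ _)⟩
  set Q := ∑ i, q i
  have hqQ : ∀ i, q i ≤ Q := fun i => Finset.single_le_sum (fun j _ => hq j) (Finset.mem_univ i)
  set M := Q * (x (Fin.last (s + 1)) - x 0)
  have hM : 0 ≤ M :=
    mul_nonneg (Finset.sum_nonneg fun i _ => hq i) (sub_nonneg.2 (hmono (Fin.zero_le _)))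
  set w : Fin s → ℝ := fun k => x k.castSucc.succ
  set α := Fin.partialSum fun _ : Fin s => M
  set β := Fin.partialSum fun k => -(M * w k)
  refine ⟨α, β, fun t ht => ?_⟩
  obtain ⟨i, hi⟩ := Fin.exists_mem_Icc_castSucc_succ hmono ht
  rw [Fin.sup'_univ_eq_of_crossings (f := fun i => α i * t + β i) hmono
      (fun k => ⟨M, hM, Fin.partialSum_affine_succ_sub M w k t⟩) hi,
    Fin.sup'_univ_eq_of_crossings hmono (fun k => ?_) hi, hφ i t hi]
  · ring
  have hw : w k ∈ Icc (x 0) (x (Fin.last (s + 1))) :=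
    ⟨hmono (Fin.zero_le _), hmono (Fin.le_last _)⟩
  have hbound := neg_mul_le_sub_mul (hq k.castSucc) (hq k.succ) (hqQ _) (hqQ _)
    (Real.dist_le_of_mem_Icc ht hw)
  refine ⟨(q k.succ - q k.castSucc) * (t - w k) +
    ((2 * q k.succ * w k + l k.succ) - (2 * q k.castSucc * w k + l k.castSucc)) + M,
    by linarith [hkink k], ?_⟩
  linear_combination
    quadratic_sub_eq_mul_of_eq (hcont k) t + Fin.partialSum_affine_succ_sub M w k t
end

section
/- The set of coefficient pairs (α_1, β_1, ..., α_s, β_s) satisfying the continuity conditions α_i x_ihi + β_i = α_{i+1} x_ihi + β_{i+1}, the convexity conditions α_i <= α_{i+1}, and the dominance conditions (6)-(7) of the paper (for a given continuous convex PWQ function φ) is nonempty. -/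
/-!
Lift every piece `φ_i` by an affine `h_i` whose slope jumps by `2K` at each breakpoint, where
`K ≥ q_i (x_{s+1} - x_0)` for all `i`. Adjacent pieces agree at their common breakpoint `p` and the
left one has the smaller slope there, so beyond `p` a piece extended across it exceeds its
neighbour by at most `q (t - p)² ≤ K |t - p|`. The jump `2K` therefore makes every lifted piece
exceed its neighbour by at least `K |t - p|` on its own side of `p`; chaining along the pieces gives
the dominance conditions, and the margin `K (x_{i+1} - x_i) ≥ q_i (x_{i+1} - x_i)²` absorbs the
gap between a piece and its tangent line.
-/

namespace PWQ

variable {ι : Type*}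

def piece (q l c : ι → ℝ) (i : ι) (t : ℝ) : ℝ := q i * t ^ 2 + l i * t + c i

def lift (q l c α β : ι → ℝ) (i : ι) (t : ℝ) : ℝ := piece q l c i t + α i * t + β i

structure IsContinuousConvex {s : ℕ} (x : Fin (s + 2) → ℝ) (q l c : Fin (s + 1) → ℝ) : Prop where
  mono : Monotone x
  nonneg : ∀ i, 0 ≤ q i
  slope_le : ∀ i : Fin s,
    2 * q i.castSucc * x i.castSucc.succ + l i.castSucc ≤
      2 * q i.succ * x i.castSucc.succ + l i.succ
  cont : ∀ i : Fin s,
    piece q l c i.castSucc (x i.castSucc.succ) = piece q l c i.succ (x i.castSucc.succ)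

theorem quadratic_sub_le_right {q₁ l₁ c₁ q₂ l₂ c₂ p t : ℝ} (hq₂ : 0 ≤ q₂)
    (hval : q₁ * p ^ 2 + l₁ * p + c₁ = q₂ * p ^ 2 + l₂ * p + c₂)
    (hslope : 2 * q₁ * p + l₁ ≤ 2 * q₂ * p + l₂) (hpt : p ≤ t) :
    (q₁ * t ^ 2 + l₁ * t + c₁) - (q₂ * t ^ 2 + l₂ * t + c₂) ≤ q₁ * (t - p) ^ 2 := by
  nlinarith [mul_nonneg hq₂ (sq_nonneg (t - p)), mul_nonneg (sub_nonneg.2 hpt) (sub_nonneg.2 hslope)]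

theorem quadratic_sub_le_left {q₁ l₁ c₁ q₂ l₂ c₂ p t : ℝ} (hq₁ : 0 ≤ q₁)
    (hval : q₁ * p ^ 2 + l₁ * p + c₁ = q₂ * p ^ 2 + l₂ * p + c₂)
    (hslope : 2 * q₁ * p + l₁ ≤ 2 * q₂ * p + l₂) (htp : t ≤ p) :
    (q₂ * t ^ 2 + l₂ * t + c₂) - (q₁ * t ^ 2 + l₁ * t + c₁) ≤ q₂ * (p - t) ^ 2 := by
  nlinarith [mul_nonneg hq₁ (sq_nonneg (p - t)), mul_nonneg (sub_nonneg.2 htp) (sub_nonneg.2 hslope)]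

theorem mul_sq_le_mul {a u W K : ℝ} (ha : 0 ≤ a) (hu : 0 ≤ u) (huW : u ≤ W) (hK : a * W ≤ K) :
    a * u ^ 2 ≤ K * u := by
  nlinarith [mul_le_mul_of_nonneg_left huW (mul_nonneg ha hu)]

theorem exists_affine_increments {s : ℕ} (δ p : Fin s → ℝ) :
    ∃ α β : Fin (s + 1) → ℝ, ∀ k : Fin s,
      α k.succ = α k.castSucc + δ k ∧ β k.succ = β k.castSucc - δ k * p k :=
  ⟨Fin.partialSum δ, Fin.partialSum fun k => -(δ k * p k), fun k => by
    simp only [Fin.partialSum_succ, sub_eq_add_neg, and_self]⟩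

section Dominance

variable {s : ℕ} {x : Fin (s + 2) → ℝ} {q l c α β : Fin (s + 1) → ℝ} {K : ℝ}

theorem IsContinuousConvex.mul_sq_le {a b : ℝ} (hφ : IsContinuousConvex x q l c)
    (hK : ∀ i, q i * (x (Fin.last _) - x 0) ≤ K)
    (ha : x 0 ≤ a) (hab : a ≤ b) (hb : b ≤ x (Fin.last _)) (j : Fin (s + 1)) :
    q j * (b - a) ^ 2 ≤ K * (b - a) :=
  mul_sq_le_mul (hφ.nonneg j) (by linarith) (by linarith) (hK j)

theorem IsContinuousConvex.lift_castSucc_add_le (hφ : IsContinuousConvex x q l c)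
    (hK : ∀ i, q i * (x (Fin.last _) - x 0) ≤ K)
    (hαβ : ∀ k : Fin s,
      α k.succ = α k.castSucc + 2 * K ∧ β k.succ = β k.castSucc - 2 * K * x k.castSucc.succ)
    (k : Fin s) {t : ℝ}
    (h₁ : x k.castSucc.succ ≤ t) (h₂ : t ≤ x (Fin.last _)) :
    lift q l c α β k.castSucc t + K * (t - x k.castSucc.succ) ≤ lift q l c α β k.succ t := by
  have hdiff := quadratic_sub_le_right (hφ.nonneg k.succ) (hφ.cont k) (hφ.slope_le k) h₁
  have hsq := hφ.mul_sq_le hK (hφ.mono (Fin.zero_le _)) h₁ h₂ k.castSucc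
  obtain ⟨hα, hβ⟩ := hαβ k
  simp only [lift, piece, hα, hβ] at hdiff ⊢
  nlinarith

theorem IsContinuousConvex.lift_succ_add_le (hφ : IsContinuousConvex x q l c)
    (hK : ∀ i, q i * (x (Fin.last _) - x 0) ≤ K)
    (hαβ : ∀ k : Fin s,
      α k.succ = α k.castSucc + 2 * K ∧ β k.succ = β k.castSucc - 2 * K * x k.castSucc.succ)
    (k : Fin s) {t : ℝ} (h₁ : x 0 ≤ t) (h₂ : t ≤ x k.castSucc.succ) :
    lift q l c α β k.succ t + K * (x k.castSucc.succ - t) ≤ lift q l c α β k.castSucc t := by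
  have hdiff := quadratic_sub_le_left (hφ.nonneg k.castSucc) (hφ.cont k) (hφ.slope_le k) h₂
  have hsq := hφ.mul_sq_le hK h₁ h₂ (hφ.mono (Fin.le_last _)) k.succ
  obtain ⟨hα, hβ⟩ := hαβ k
  simp only [lift, piece, hα, hβ] at hdiff ⊢
  nlinarith

theorem IsContinuousConvex.lift_add_le_of_lt (hφ : IsContinuousConvex x q l c) (hK₀ : 0 ≤ K)
    (hK : ∀ i, q i * (x (Fin.last _) - x 0) ≤ K)
    (hαβ : ∀ k : Fin s,
      α k.succ = α k.castSucc + 2 * K ∧ β k.succ = β k.castSucc - 2 * K * x k.castSucc.succ)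
    {i j : Fin (s + 1)} (hji : j < i) {t : ℝ} (h₁ : x i.castSucc ≤ t) (h₂ : t ≤ x (Fin.last _)) :
    lift q l c α β j t + K * (t - x i.castSucc) ≤ lift q l c α β i t := by
  induction i using Fin.induction generalizing j with
  | zero => exact absurd hji (Fin.not_lt_zero j)
  | succ k ih =>
    rw [← Fin.succ_castSucc] at h₁ ⊢
    have hstep := hφ.lift_castSucc_add_le hK hαβ k h₁ h₂
    rcases (Fin.le_castSucc_iff.2 hji).eq_or_lt with rfl | hjk
    · exact hstep
    · have hx : x k.castSucc.castSucc ≤ t := (hφ.mono (Fin.castSucc_le_succ _)).trans h₁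
      have := ih hjk hx
      nlinarith [mul_nonneg hK₀ (sub_nonneg.2 hx)]

theorem IsContinuousConvex.lift_add_le_of_gt (hφ : IsContinuousConvex x q l c) (hK₀ : 0 ≤ K)
    (hK : ∀ i, q i * (x (Fin.last _) - x 0) ≤ K)
    (hαβ : ∀ k : Fin s,
      α k.succ = α k.castSucc + 2 * K ∧ β k.succ = β k.castSucc - 2 * K * x k.castSucc.succ)
    {i j : Fin (s + 1)} (hij : i < j) {t : ℝ} (h₁ : x 0 ≤ t) (h₂ : t ≤ x i.succ) :
    lift q l c α β j t + K * (x i.succ - t) ≤ lift q l c α β i t := by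
  induction j using Fin.induction generalizing i with
  | zero => exact absurd hij (Fin.not_lt_zero i)
  | succ k ih =>
    have hik : i ≤ k.castSucc := Fin.le_castSucc_iff.2 hij
    have hx : t ≤ x k.castSucc.succ := h₂.trans (hφ.mono (Fin.succ_le_succ_iff.2 hik))
    have hstep := hφ.lift_succ_add_le hK hαβ k h₁ hx
    rcases hik.eq_or_lt with rfl | hik
    · exact hstep
    · have := ih hik h₂
      nlinarith [mul_nonneg hK₀ (sub_nonneg.2 hx)]

end Dominance

end PWQ

/-- Theorem 2: For every continuous convex PWQ function (data
`q, l, c` with `qᵢ ≥ 0` and nondecreasing one-sided slopes, on a strictly increasing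
partition), the set of coefficients `(αᵢ, βᵢ)` satisfying the PWA continuity
conditions, the slope monotonicity conditions, and the dominance conditions (6)-(7)
is nonempty. -/
theorem feasible_pwa_coefficients_exist
    (s : ℕ)
    (x : Fin (s + 2) → ℝ) (hx : StrictMono x)
    (q l c : Fin (s + 1) → ℝ)
    (hq : ∀ i, 0 ≤ q i)
    (hkink : ∀ i : Fin s,
      2 * q i.castSucc * x i.castSucc.succ + l i.castSucc ≤
        2 * q i.succ * x i.castSucc.succ + l i.succ)
    -- continuity of φ at the breakpoints
    (hφcont : ∀ i : Fin s,
      q i.castSucc * (x i.castSucc.succ) ^ 2 + l i.castSucc * x i.castSucc.succ + c i.castSucc =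
        q i.succ * (x i.castSucc.succ) ^ 2 + l i.succ * x i.castSucc.succ + c i.succ) :
    ∃ α β : Fin (s + 1) → ℝ,
      -- continuity of h at the breakpoints
      (∀ i : Fin s,
        α i.castSucc * x i.castSucc.succ + β i.castSucc =
          α i.succ * x i.castSucc.succ + β i.succ) ∧
      -- convexity of h: nondecreasing slopes
      (∀ i : Fin s, α i.castSucc ≤ α i.succ) ∧
      -- dominance conditions (6) for j < i
      (∀ i j : Fin (s + 1), j < i →
        q j * (x i.castSucc) ^ 2 + l j * x i.castSucc + c j + α j * x i.castSucc + β j ≤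
          q i * (x i.castSucc) ^ 2 + l i * x i.castSucc + c i + α i * x i.castSucc + β i) ∧
      (∀ i j : Fin (s + 1), j < i →
        q j * (x i.succ) ^ 2 + l j * x i.succ + c j + α j * x i.succ + β j ≤
          q i * (x i.castSucc) ^ 2 + l i * x i.castSucc + c i + α i * x i.castSucc + β i +
            (x i.succ - x i.castSucc) * (2 * q i * x i.castSucc + l i + α i)) ∧
      -- dominance conditions (7) for j > i
      (∀ i j : Fin (s + 1), i < j →
        q j * (x i.succ) ^ 2 + l j * x i.succ + c j + α j * x i.succ + β j ≤
          q i * (x i.succ) ^ 2 + l i * x i.succ + c i + α i * x i.succ + β i) ∧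
      (∀ i j : Fin (s + 1), i < j →
        q j * (x i.castSucc) ^ 2 + l j * x i.castSucc + c j + α j * x i.castSucc + β j ≤
          q i * (x i.succ) ^ 2 + l i * x i.succ + c i + α i * x i.succ + β i -
            (x i.succ - x i.castSucc) * (2 * q i * x i.succ + l i + α i)) := by
  have hφ : PWQ.IsContinuousConvex x q l c := ⟨hx.monotone, hq, hkink, hφcont⟩
  have hx₀ : ∀ i, x 0 ≤ x i := fun i => hφ.mono (Fin.zero_le i)
  have hxₗ : ∀ i, x i ≤ x (Fin.last _) := fun i => hφ.mono (Fin.le_last i)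
  obtain ⟨K, hK⟩ := Finite.exists_le fun i => q i * (x (Fin.last _) - x 0)
  have hK₀ : 0 ≤ K := (mul_nonneg (hq 0) (sub_nonneg.2 (hx₀ _))).trans (hK 0)
  obtain ⟨α, β, hαβ⟩ := PWQ.exists_affine_increments (fun _ => 2 * K) fun k => x k.castSucc.succ
  have hgap : ∀ i : Fin (s + 1), q i * (x i.succ - x i.castSucc) ^ 2 ≤
      K * (x i.succ - x i.castSucc) := fun i =>
    hφ.mul_sq_le hK (hx₀ _) (hφ.mono (Fin.castSucc_le_succ _)) (hxₗ _) i
  refine ⟨α, β, fun k => ?_, fun k => ?_, fun i j hji => ?_, fun i j hji => ?_,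
    fun i j hij => ?_, fun i j hij => ?_⟩
  · rw [(hαβ k).1, (hαβ k).2]; ring
  · linarith [(hαβ k).1]
  · simpa only [PWQ.lift, PWQ.piece, sub_self, mul_zero, add_zero] using
      hφ.lift_add_le_of_lt hK₀ hK hαβ hji le_rfl (hxₗ _)
  · have := hφ.lift_add_le_of_lt hK₀ hK hαβ hji (hφ.mono (Fin.castSucc_le_succ _)) (hxₗ _)
    simp only [PWQ.lift, PWQ.piece] at this
    linear_combination this + hgap i
  · simpa only [PWQ.lift, PWQ.piece, sub_self, mul_zero, add_zero] using
      hφ.lift_add_le_of_gt hK₀ hK hαβ hij (hx₀ _) le_rfl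
  · have := hφ.lift_add_le_of_gt hK₀ hK hαβ hij (hx₀ _) (hφ.mono (Fin.castSucc_le_succ _))
    simp only [PWQ.lift, PWQ.piece] at this
    linear_combination this + hgap i
end

section
/- In Algorithm 1 of the paper (iterative correction of PWA coefficients), a single update step for case j < i — replacing α_k by α_k + Δα and β_k by β_k - Δα·x_jhi for all k <= j, with Δα <= 0 — preserves continuity of the PWA function (α_k x_khi + β_k = α_{k+1} x_khi + β_{k+1} for all k) and preserves monotonicity of slopes (α_k <= α_{k+1} for all k). -/
open Set

/-- A single update step of Algorithm 1 for the case `j < i` —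
replacing `αₖ` by `αₖ + Δα` and `βₖ` by `βₖ - Δα·x̄ⱼ` for all `k ≤ j`, with
`Δα ≤ 0` — preserves continuity of the PWA function at all breakpoints and
preserves the monotonicity of the slopes. -/
theorem algorithm_update_preserves_continuity_and_monotonicity
    (s : ℕ)
    (x : Fin (s + 2) → ℝ) (hx : StrictMono x)
    (α β : Fin (s + 1) → ℝ)
    (j : Fin (s + 1)) (Δα : ℝ) (hΔα : Δα ≤ 0)
    -- continuity at breakpoints before the update
    (hcont : ∀ k : Fin s,
      α k.castSucc * x k.castSucc.succ + β k.castSucc =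
        α k.succ * x k.castSucc.succ + β k.succ)
    -- slope monotonicity before the update
    (hmono : ∀ k : Fin s, α k.castSucc ≤ α k.succ)
    -- the updated coefficients
    (α' β' : Fin (s + 1) → ℝ)
    (hα' : ∀ k : Fin (s + 1), α' k = if k ≤ j then α k + Δα else α k)
    (hβ' : ∀ k : Fin (s + 1), β' k = if k ≤ j then β k - Δα * x j.succ else β k) :
    (∀ k : Fin s,
      α' k.castSucc * x k.castSucc.succ + β' k.castSucc =
        α' k.succ * x k.castSucc.succ + β' k.succ) ∧
    (∀ k : Fin s, α' k.castSucc ≤ α' k.succ) := by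
  have key : ∀ k : Fin s, ¬ k.succ ≤ j → k.castSucc ≤ j → j = k.castSucc := by
    intro k h1 h2
    rw [Fin.ext_iff]
    simp only [Fin.le_def, Fin.coe_castSucc, Fin.val_succ, not_le, Fin.lt_def] at *
    omega
  have hle : ∀ k : Fin s, k.succ ≤ j → k.castSucc ≤ j := by
    intro k h
    refine le_trans ?_ h
    simp [Fin.le_def]
  constructor
  · intro k
    rw [hα', hα', hβ', hβ']
    by_cases h1 : k.succ ≤ j
    · simp only [hle k h1, if_pos, h1]
      linarith [hcont k]
    · by_cases h2 : k.castSucc ≤ j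
      · have hj := key k h1 h2
        subst hj
        simp only [if_pos h2, if_neg h1]
        linarith [hcont k]
      · simp only [if_neg h1, if_neg h2]
        exact hcont k
  · intro k
    rw [hα', hα']
    by_cases h1 : k.succ ≤ j
    · simp only [hle k h1, if_pos, h1]
      linarith [hmono k]
    · by_cases h2 : k.castSucc ≤ j
      · simp only [if_pos h2, if_neg h1]
        linarith [hmono k]
      · simp only [if_neg h1, if_neg h2]
        exact hmono k
end
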